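/- arXiv:2104.09129 — 6 statements merged into one kernel-verified Lean document; each statement's English description precedes it below -/
import Mathlib

section
/- For every nonnegative integer α, all real numbers x, y, and every natural number n, the Bell-based Euler polynomial of order α satisfies ₍B₎E_n^(α)(x;y) = Σ_{k=0}^{n} C(n,k) · E_k^(α)(x) · B_{n−k}(y), where C(n,k) is the binomial coefficient. -/
open PowerSeries Finset

/-- The series `e^{x t}`. -/
noncomputable def expXT (x : ℝ) : PowerSeries ℝ :=
  PowerSeries.rescale x (PowerSeries.exp ℝ)

/-- The series `e^{y (e^t - 1)} = ∑_{k ≥ 0} y^k (e^t - 1)^k / k!`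
(the inner sum is finite in each coefficient since `(e^t - 1)^k` has order `≥ k`). -/
noncomputable def bellSeries (y : ℝ) : PowerSeries ℝ :=
  PowerSeries.mk fun n =>
    ∑ k ∈ Finset.range (n + 1),
      y ^ k * ((k.factorial : ℝ))⁻¹ * PowerSeries.coeff n ((PowerSeries.exp ℝ - 1) ^ k)

/-- The series `(2 / (e^t + 1))^α`. -/
noncomputable def eulerSeries (α : ℕ) : PowerSeries ℝ :=
  (2 * (PowerSeries.exp ℝ + 1)⁻¹) ^ α

/-- The Bell-based Euler polynomial `₍B₎E_n^(α)(x; y)`: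
`n!` times the coefficient of `t^n` in `(2/(e^t+1))^α e^{xt + y(e^t-1)}`. -/
noncomputable def bellEuler (α : ℕ) (x y : ℝ) (n : ℕ) : ℝ :=
  n.factorial * PowerSeries.coeff n (eulerSeries α * expXT x * bellSeries y)

/-- The Euler polynomial of order α: `E_n^(α)(x)` with
`∑ E_n^(α)(x) t^n/n! = (2/(e^t+1))^α e^{xt}`. -/
noncomputable def eulerPoly (α : ℕ) (x : ℝ) (n : ℕ) : ℝ :=
  n.factorial * PowerSeries.coeff n (eulerSeries α * expXT x)

/-- The Bell polynomial `B_n(y)` with `∑ B_n(y) t^n/n! = e^{y(e^t-1)}`. -/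
noncomputable def bellPoly (y : ℝ) (n : ℕ) : ℝ :=
  n.factorial * PowerSeries.coeff n (bellSeries y)

theorem PowerSeries.factorial_mul_coeff_mul {R : Type*} [CommSemiring R] (f g : R⟦X⟧) (n : ℕ) :
    (n.factorial : R) * coeff n (f * g) =
      ∑ k ∈ range (n + 1), (n.choose k : R) * (k.factorial * coeff k f) *
        ((n - k).factorial * coeff (n - k) g) := by
  rw [coeff_mul, Nat.sum_antidiagonal_eq_sum_range_succ_mk, mul_sum]
  refine sum_congr rfl fun k hk => ?_
  have hkn : k ≤ n := Nat.lt_succ_iff.mp (mem_range.mp hk)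
  rw [← Nat.choose_mul_factorial_mul_factorial hkn]
  push_cast
  ring

theorem stmt0 (α : ℕ) (x y : ℝ) (n : ℕ) :
    bellEuler α x y n =
      ∑ k ∈ Finset.range (n + 1),
        (n.choose k : ℝ) * eulerPoly α x k * bellPoly y (n - k) :=
  factorial_mul_coeff_mul (eulerSeries α * expXT x) (bellSeries y) n
end

section
/- For all nonnegative integers α₁, α₂, all real numbers x₁, x₂, y₁, y₂, and every natural number n, the addition formula ₍B₎E_n^(α₁+α₂)(x₁+x₂; y₁+y₂) = Σ_{k=0}^{n} C(n,k) · ₍B₎E_k^(α₁)(x₁;y₁) · ₍B₎E_{n−k}^(α₂)(x₂;y₂) holds. -/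
open PowerSeries Finset

/-! The generating function factors: `(2/(e^t+1))^α` and `e^{xt}` are multiplicative in `α` and
`x`, and `e^{y(e^t-1)}` is `e^{yt}` with `e^t - 1` substituted for `t`, so it inherits the
functional equation of the exponential. The `n!`-scaled coefficients of a product of power series
are the binomial convolution of those of the factors. -/

namespace PowerSeries

lemma factorial_mul_coeff_mul_s3 {R : Type*} [CommSemiring R] (f g : R⟦X⟧) (n : ℕ) :
    n.factorial * coeff n (f * g) = ∑ k ∈ range (n + 1),
      (n.choose k : R) * (k.factorial * coeff k f) * ((n - k).factorial * coeff (n - k) g) := by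
  rw [coeff_mul, Nat.sum_antidiagonal_eq_sum_range_succ_mk, mul_sum]
  refine sum_congr rfl fun k hk => ?_
  have hfac : (n.choose k * k.factorial * (n - k).factorial : R) = n.factorial := by
    rw [← Nat.cast_mul, ← Nat.cast_mul,
      Nat.choose_mul_factorial_mul_factorial (Nat.lt_succ_iff.mp (mem_range.mp hk))]
  rw [← hfac]
  ring

lemma coeff_exp_sub_one_pow_of_lt {A : Type*} [CommRing A] [Algebra ℚ A] {n k : ℕ} (h : n < k) :
    coeff n ((exp A - 1) ^ k) = 0 := by
  have hX : (X : A⟦X⟧) ∣ exp A - 1 := by simp [X_dvd_iff, constantCoeff_exp]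
  exact X_pow_dvd_iff.mp (pow_dvd_pow_of_dvd hX k) n h

end PowerSeries

lemma expXT_add (x₁ x₂ : ℝ) : expXT (x₁ + x₂) = expXT x₁ * expXT x₂ :=
  (exp_mul_exp_eq_exp_add x₁ x₂).symm

lemma eulerSeries_add (α₁ α₂ : ℕ) : eulerSeries (α₁ + α₂) = eulerSeries α₁ * eulerSeries α₂ :=
  pow_add _ α₁ α₂

lemma bellSeries_eq_subst (y : ℝ) : bellSeries y = (rescale y (exp ℝ)).subst (exp ℝ - 1) := by
  ext n
  rw [coeff_subst' HasSubst.exp_sub_one, bellSeries, coeff_mk,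
    finsum_eq_sum_of_support_subset (s := range (n + 1))]
  · refine sum_congr rfl fun k _ => ?_
    simp [coeff_rescale, coeff_exp, smul_eq_mul]
  · intro k hk
    rw [coe_range, Set.mem_Iio, Nat.lt_succ_iff]
    by_contra! hnk
    exact hk (by simp [coeff_exp_sub_one_pow_of_lt hnk])

lemma bellSeries_add (y₁ y₂ : ℝ) : bellSeries (y₁ + y₂) = bellSeries y₁ * bellSeries y₂ := by
  simp only [bellSeries_eq_subst, ← subst_mul HasSubst.exp_sub_one, exp_mul_exp_eq_exp_add]

theorem stmt3 (α₁ α₂ : ℕ) (x₁ x₂ y₁ y₂ : ℝ) (n : ℕ) :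
    bellEuler (α₁ + α₂) (x₁ + x₂) (y₁ + y₂) n =
      ∑ k ∈ Finset.range (n + 1),
        (n.choose k : ℝ) * bellEuler α₁ x₁ y₁ k * bellEuler α₂ x₂ y₂ (n - k) := by
  have hsplit : eulerSeries (α₁ + α₂) * expXT (x₁ + x₂) * bellSeries (y₁ + y₂) =
      (eulerSeries α₁ * expXT x₁ * bellSeries y₁) * (eulerSeries α₂ * expXT x₂ * bellSeries y₂) := by
    rw [eulerSeries_add, expXT_add, bellSeries_add]
    ring
  rw [bellEuler, hsplit]
  exact factorial_mul_coeff_mul_s3 _ _ n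
end

section
/- For every nonnegative integer α, all real numbers x, y, and every natural number n, ₍B₎E_n^(α)(x+1;y) = Σ_{k=0}^{n} C(n,k) · ₍B₎E_k^(α)(x;y). -/
open PowerSeries Finset

/-! Replacing `x` by `x + 1` multiplies the generating function by `e^t`, and multiplying an
exponential generating function by `e^t` is the binomial transform of its coefficient sequence. -/

open scoped Nat

theorem PowerSeries.factorial_mul_coeff_mul_exp {K : Type*} [Field K] [CharZero K]
    (f : PowerSeries K) (n : ℕ) :
    n ! * coeff n (f * exp K) = ∑ k ∈ range (n + 1), (n.choose k : K) * (k ! * coeff k f) := by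
  rw [coeff_mul, Nat.sum_antidiagonal_eq_sum_range_succ_mk, mul_sum]
  refine sum_congr rfl fun k hk => ?_
  have hkn : k ≤ n := Nat.lt_succ_iff.mp (mem_range.mp hk)
  have hfac : (n ! : K) = n.choose k * k ! * (n - k)! := by
    exact_mod_cast (Nat.choose_mul_factorial_mul_factorial hkn).symm
  have hfac_ne : ((n - k)! : K) ≠ 0 := Nat.cast_ne_zero.mpr (Nat.factorial_ne_zero _)
  rw [coeff_exp, map_div₀, map_one, map_natCast, hfac]
  field_simp

lemma expXT_add_one (x : ℝ) : expXT (x + 1) = expXT x * exp ℝ := by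
  rw [expXT, expXT, ← exp_mul_exp_eq_exp_add x 1, rescale_one, RingHom.id_apply]

theorem stmt4 (α : ℕ) (x y : ℝ) (n : ℕ) :
    bellEuler α (x + 1) y n =
      ∑ k ∈ Finset.range (n + 1), (n.choose k : ℝ) * bellEuler α x y k := by
  rw [bellEuler, expXT_add_one,
    show eulerSeries α * (expXT x * exp ℝ) * bellSeries y =
      eulerSeries α * expXT x * bellSeries y * exp ℝ by ring]
  exact factorial_mul_coeff_mul_exp _ n
end

section
/- For every nonnegative integer α and every natural number n ≥ 1, the partial derivative with respect to x of the Bell-based Euler polynomial of order α satisfies ∂/∂x ₍B₎E_n^(α)(x;y) = n · ₍B₎E_{n−1}^(α)(x;y), where ₍B₎E_n^(α)(x;y) is regarded as a polynomial function of the real variables x and y. -/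
open PowerSeries Finset

/-! Differentiating `e^{xt}` in `x` multiplies it by `t`, so differentiating the generating
function in `x` multiplies it by `t` as well, which shifts its coefficients by one. -/

namespace PowerSeries

variable {𝕜 : Type*} [NontriviallyNormedField 𝕜]

theorem hasDerivAt_coeff_rescale (f : 𝕜⟦X⟧) (k : ℕ) (a : 𝕜) :
    HasDerivAt (fun a => coeff k (rescale a f)) (coeff k (X * rescale a (d⁄dX 𝕜 f))) a := by
  rcases k with _ | m
  · simpa [coeff_rescale] using hasDerivAt_const a (coeff 0 f)
  · rw [coeff_succ_X_mul]
    simp only [coeff_rescale, coeff_derivative]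
    refine ((hasDerivAt_pow (m + 1) a).mul_const (coeff (m + 1) f)).congr_deriv ?_
    rw [Nat.add_sub_cancel]
    push_cast
    ring

theorem hasDerivAt_coeff_mul_const {f : 𝕜 → 𝕜⟦X⟧} {f' : 𝕜⟦X⟧} {a : 𝕜}
    (hf : ∀ k, HasDerivAt (fun a => coeff k (f a)) (coeff k f') a) (g : 𝕜⟦X⟧) (n : ℕ) :
    HasDerivAt (fun a => coeff n (f a * g)) (coeff n (f' * g)) a := by
  simp only [coeff_mul]
  exact HasDerivAt.fun_sum fun p _ => (hf p.1).mul_const (coeff p.2 g)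

end PowerSeries

theorem hasDerivAt_coeff_expXT (k : ℕ) (x : ℝ) :
    HasDerivAt (fun x => coeff k (expXT x)) (coeff k (X * expXT x)) x := by
  simpa only [expXT, derivative_exp] using hasDerivAt_coeff_rescale (exp ℝ) k x

theorem hasDerivAt_coeff_expXT_mul (g : ℝ⟦X⟧) (n : ℕ) (x : ℝ) :
    HasDerivAt (fun x => coeff n (expXT x * g)) (coeff n (X * (expXT x * g))) x := by
  simpa only [mul_assoc] using hasDerivAt_coeff_mul_const (hasDerivAt_coeff_expXT · x) g n

theorem bellEuler_eq_factorial_mul_coeff_expXT_mul (α : ℕ) (x y : ℝ) (n : ℕ) :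
    bellEuler α x y n
      = n.factorial * coeff n (expXT x * (eulerSeries α * bellSeries y)) := by
  rw [bellEuler]
  congr 2
  ring

theorem stmt8_general (α : ℕ) (n : ℕ) (x y : ℝ) :
    deriv (fun x' => bellEuler α x' y n) x = n * bellEuler α x y (n - 1) := by
  simp only [bellEuler_eq_factorial_mul_coeff_expXT_mul]
  rw [((hasDerivAt_coeff_expXT_mul _ n x).const_mul _).deriv]
  rcases n with _ | m
  · simp
  · rw [coeff_succ_X_mul, Nat.add_sub_cancel, Nat.factorial_succ]
    push_cast
    ring

theorem stmt8 (α : ℕ) (n : ℕ) (hn : 1 ≤ n) (x y : ℝ) :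
    deriv (fun x' => bellEuler α x' y n) x = n * bellEuler α x y (n - 1) :=
  stmt8_general α n x y
end

section
/- For every integer α ≥ 1 and every natural number n, the partial derivative with respect to y of the Bell-based Euler polynomial of order α satisfies ∂/∂y ₍B₎E_n^(α)(x;y) = −2 · ( ₍B₎E_n^(α)(x;y) − ₍B₎E_n^(α−1)(x;y) ), where ₍B₎E_n^(α)(x;y) is regarded as a polynomial function of the real variables x and y. -/
open PowerSeries Finset

/-! Each coefficient of `e^{y(e^t - 1)}` is a polynomial in `y`, and differentiating it termwise
shows `∂_y e^{y(e^t - 1)} = (e^t - 1) e^{y(e^t - 1)}`. Since `u = 2/(e^t + 1)` satisfies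
`u (e^t - 1) = -2 (u - 1)`, multiplying by `u^α e^{xt}` turns this into the stated recurrence. -/

lemma coeff_exp_sub_one_pow_of_lt {m k : ℕ} (h : m < k) :
    coeff m ((exp ℝ - 1) ^ k) = 0 :=
  coeff_of_lt_order m <| (Nat.cast_lt.2 h).trans_le <|
    le_order_pow_of_constantCoeff_eq_zero k (by simp)

lemma coeff_bellSeries_eq_sum {m N : ℕ} (hN : m ≤ N) (y : ℝ) :
    coeff m (bellSeries y) =
      ∑ k ∈ range (N + 1), y ^ k * (k.factorial : ℝ)⁻¹ * coeff m ((exp ℝ - 1) ^ k) := by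
  rw [bellSeries, coeff_mk]
  refine sum_subset (range_subset_range.2 (by omega)) fun k _ hk => ?_
  rw [coeff_exp_sub_one_pow_of_lt (by simpa using hk), mul_zero]

lemma coeff_mul_bellSeries_eq_sum (A : ℝ⟦X⟧) {n N : ℕ} (hN : n ≤ N) (y : ℝ) :
    coeff n (A * bellSeries y) =
      ∑ k ∈ range (N + 1), y ^ k * (k.factorial : ℝ)⁻¹ * coeff n (A * (exp ℝ - 1) ^ k) := by
  simp only [coeff_mul, mul_sum]
  rw [sum_comm]
  refine sum_congr rfl fun p hp => ?_
  rw [coeff_bellSeries_eq_sum ((HasAntidiagonal.antidiagonal.snd_le hp).trans hN), mul_sum]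
  exact sum_congr rfl fun k _ => by ring

lemma hasDerivAt_pow_succ_mul_inv_factorial (k : ℕ) (y : ℝ) :
    HasDerivAt (fun y : ℝ => y ^ (k + 1) * ((k + 1).factorial : ℝ)⁻¹)
      (y ^ k * (k.factorial : ℝ)⁻¹) y := by
  refine ((hasDerivAt_pow (k + 1) y).mul_const _).congr_deriv ?_
  rw [Nat.factorial_succ, Nat.cast_mul, Nat.add_sub_cancel]
  field_simp

lemma hasDerivAt_coeff_mul_bellSeries (A : ℝ⟦X⟧) (n : ℕ) (y : ℝ) :
    HasDerivAt (fun y => coeff n (A * bellSeries y))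
      (coeff n (A * (exp ℝ - 1) * bellSeries y)) y := by
  have hsum : (fun y => coeff n (A * bellSeries y)) = fun y =>
      ∑ k ∈ range (n + 1), y ^ (k + 1) * ((k + 1).factorial : ℝ)⁻¹ *
        coeff n (A * (exp ℝ - 1) ^ (k + 1)) + coeff n A := by
    -- one spare term, so that after the shift `k ↦ k + 1` the sum is the `N = n` expansion
    funext y
    rw [coeff_mul_bellSeries_eq_sum A (Nat.le_succ n), sum_range_succ']
    simp
  rw [hsum, coeff_mul_bellSeries_eq_sum _ le_rfl]
  refine (HasDerivAt.fun_sum fun k _ => ?_).add_const _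
  rw [pow_succ', ← mul_assoc]
  exact (hasDerivAt_pow_succ_mul_inv_factorial k y).mul_const _

lemma two_mul_inv_exp_add_one_mul_exp_sub_one :
    2 * (exp ℝ + 1)⁻¹ * (exp ℝ - 1) = (-2 : ℝ) • (2 * (exp ℝ + 1)⁻¹ - 1) := by
  have hinv : (exp ℝ + 1) * (exp ℝ + 1)⁻¹ = 1 := PowerSeries.mul_inv_cancel _ (by simp)
  rw [smul_eq_C_mul, map_neg, map_ofNat]
  linear_combination (2 : ℝ⟦X⟧) * hinv

lemma eulerSeries_succ_mul_exp_sub_one (α : ℕ) :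
    eulerSeries (α + 1) * (exp ℝ - 1) = (-2 : ℝ) • (eulerSeries (α + 1) - eulerSeries α) := by
  rw [eulerSeries, eulerSeries, pow_succ, mul_assoc, two_mul_inv_exp_add_one_mul_exp_sub_one,
    mul_smul_comm, mul_sub, mul_one]

theorem stmt9 (α : ℕ) (hα : 1 ≤ α) (n : ℕ) (x y : ℝ) :
    deriv (fun y' => bellEuler α x y' n) y =
      -2 * (bellEuler α x y n - bellEuler (α - 1) x y n) := by
  obtain ⟨β, rfl⟩ := Nat.exists_eq_add_of_le' hα
  have hderiv := (hasDerivAt_coeff_mul_bellSeries (eulerSeries (β + 1) * expXT x) n y).const_mul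
    (n.factorial : ℝ)
  simp only [bellEuler, hderiv.deriv, Nat.add_sub_cancel]
  rw [mul_right_comm _ (expXT x), eulerSeries_succ_mul_exp_sub_one, smul_mul_assoc,
    smul_mul_assoc, coeff_smul, sub_mul, sub_mul, map_sub, smul_eq_mul]
  ring
end

section
/- For every integer μ ≥ 1, every real number y, and every natural number n, ₍B₎E_n^(μ)(y) = Σ_{(i₁,…,i_μ) ∈ ℕ^μ, i₁+⋯+i_μ = n} ( n! / (i₁!⋯i_μ!) ) · ₍B₎E_{i_μ}(y) · Π_{j=1}^{μ−1} E_{i_j}, where E_m are the Euler numbers (order 1) and ₍B₎E_m(y) := ₍B₎E_m^(1)(0;y). -/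
/-! The generating function `(2/(e^t+1))^μ e^{y(e^t-1)}` is the product of `μ - 1` copies of
`2/(e^t+1)` and one copy of `2/(e^t+1) · e^{y(e^t-1)}`, so the formula is the multinomial
product rule for exponential generating functions. -/

open PowerSeries Finset

/-- The Euler number `E_n` with `∑ E_n t^n/n! = 2/(e^t+1)`. -/
noncomputable def eulerNum (n : ℕ) : ℝ :=
  n.factorial * PowerSeries.coeff n (2 * (PowerSeries.exp ℝ + 1)⁻¹)

/-- `₍B₎E_n^(μ)(y) = ₍B₎E_n^(μ)(0;y)`, with
`∑ ₍B₎E_n^(μ)(y) t^n/n! = (2/(e^t+1))^μ e^{y(e^t-1)}`. -/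
noncomputable def bellEulerAt0 (μ : ℕ) (y : ℝ) (n : ℕ) : ℝ :=
  n.factorial * PowerSeries.coeff n (eulerSeries μ * bellSeries y)

namespace PowerSeries

variable {R : Type*} [CommSemiring R]

theorem coeff_prod_fin {k : ℕ} (f : Fin k → R⟦X⟧) (n : ℕ) :
    coeff n (∏ j, f j) = ∑ i ∈ Finset.Nat.antidiagonalTuple k n, ∏ j, coeff (i j) (f j) := by
  classical
  rw [coeff_prod, finsuppAntidiag, sum_map, ← piAntidiag_univ_fin_eq_antidiagonalTuple]
  exact sum_attach _ fun i : Fin k → ℕ => ∏ j, coeff (i j) (f j)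

theorem factorial_mul_coeff_prod_fin {K : Type*} [Field K] [CharZero K] {k : ℕ}
    (f : Fin k → K⟦X⟧) (n : ℕ) :
    n.factorial * coeff n (∏ j, f j) =
      ∑ i ∈ Finset.Nat.antidiagonalTuple k n,
        ((n.factorial : K) / ∏ j, ((i j).factorial : K)) *
          ∏ j, ((i j).factorial * coeff (i j) (f j)) := by
  rw [coeff_prod_fin, mul_sum]
  refine sum_congr rfl fun i _ => ?_
  have hfact : (∏ j, ((i j).factorial : K)) ≠ 0 :=
    prod_ne_zero_iff.mpr fun j _ => Nat.cast_ne_zero.mpr (Nat.factorial_ne_zero _)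
  rw [prod_mul_distrib]
  field_simp

end PowerSeries

theorem eulerSeries_succ_mul_bellSeries_eq_prod (m : ℕ) (y : ℝ) :
    eulerSeries (m + 1) * bellSeries y =
      ∏ j : Fin (m + 1),
        Fin.lastCases (eulerSeries 1 * bellSeries y) (fun _ => eulerSeries 1) j := by
  simp only [Fin.prod_univ_castSucc, Fin.lastCases_last, Fin.lastCases_castSucc, prod_const,
    card_univ, Fintype.card_fin, eulerSeries, pow_succ]
  ring

theorem stmt13 (μ : ℕ) (hμ : 1 ≤ μ) (y : ℝ) (n : ℕ) :
    bellEulerAt0 μ y n =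
      ∑ i ∈ Finset.Nat.antidiagonalTuple μ n,
        ((n.factorial : ℝ) / ∏ j, ((i j).factorial : ℝ)) *
          bellEulerAt0 1 y (i ⟨μ - 1, by omega⟩) *
          ∏ j : Fin (μ - 1), eulerNum (i (Fin.castLE (Nat.sub_le μ 1) j)) := by
  obtain ⟨m, rfl⟩ := Nat.exists_eq_add_of_le' hμ
  rw [bellEulerAt0, eulerSeries_succ_mul_bellSeries_eq_prod, factorial_mul_coeff_prod_fin]
  refine sum_congr rfl fun i _ => ?_
  -- `m + 1 - 1` reduces to `m`, so the indexing of the statement is `Fin.last` / `Fin.castSucc`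
  change _ = _ * bellEulerAt0 1 y (i (Fin.last m)) * ∏ j : Fin m, eulerNum (i (Fin.castSucc j))
  simp only [Fin.prod_univ_castSucc, Fin.lastCases_last, Fin.lastCases_castSucc, bellEulerAt0,
    eulerNum, eulerSeries, pow_one]
  ring
end
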